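/- arXiv:1710.07034 — 4 statements merged into one kernel-verified Lean document; each statement's English description precedes it below -/
import Mathlib

section
/- Let n ≥ 1 and let t denote the variable X of the polynomial ring ℤ[t]. Let A_n and B_n be the n×n matrices over ℤ[t] with entries (A_n)_{ij} = 2 if i ≤ j and 1 if i > j, and (B_n)_{ij} = 1 if i ≤ j and 2 if i > j. Then det(t·A_n − B_nᵀ) = 2tⁿ − 1 in ℤ[t]. -/
/-!
Write `M = X • A - Bᵀ` and `J` for the all-ones matrix. Since `J` has rank one, `det (M + s • J)`
is affine in `s`. At `s = -(X - 1)` the matrix is upper triangular with diagonal `X`, and at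
`s = -2 (X - 1)` it is lower unitriangular, so extrapolating to `s = 0` gives `2 Xⁿ - 1`.
-/

open Polynomial

namespace Matrix

variable {n R : Type*} [Fintype n] [DecidableEq n] [CommRing R]

theorem exists_det_add_smul_ones_eq_add_mul (M : Matrix n n R) :
    ∃ c : R, ∀ s : R, (M + s • of fun _ _ => 1).det = M.det + s * c := by
  cases isEmpty_or_nonempty n with
  | inl _ => exact ⟨0, fun s => by simp [det_isEmpty]⟩
  | inr hn =>
    obtain ⟨k⟩ := hn
    -- subtracting row `k` from every other row confines `s` to row `k`
    let N : Matrix n n R := of fun i j => if i = k then M k j else M i j - M k j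
    have hdet : ∀ s : R, (M + s • of fun _ _ => 1).det = (N.updateRow k (M k + s • 1)).det := by
      intro s
      refine det_eq_of_forall_row_eq_smul_add_const (fun i => if i = k then 0 else 1) k
        (if_pos rfl) fun i j => ?_
      by_cases hi : i = k
      · subst hi
        simp [N]
      · simp [N, hi]
        abel
    have hdet₀ : M.det = (N.updateRow k (M k)).det := by simpa using hdet 0
    exact ⟨(N.updateRow k 1).det, fun s => by
      rw [hdet, det_updateRow_add, det_updateRow_smul, hdet₀]⟩

theorem det_eq_pow_of_isUpperTriangular [LinearOrder n] {M : Matrix n n R}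
    (hM : M.IsUpperTriangular) {d : R} (hd : ∀ i, M i i = d) :
    M.det = d ^ Fintype.card n := by
  rw [det_of_isUpperTriangular hM, Finset.prod_congr rfl fun i _ => hd i, Finset.prod_const,
    Finset.card_univ]

end Matrix

open Matrix

theorem det_tA_sub_Bt_general (n : ℕ)
    (A B : Matrix (Fin n) (Fin n) (Polynomial ℤ))
    (hA : ∀ i j, A i j = if i ≤ j then 2 else 1)
    (hB : ∀ i j, B i j = if i ≤ j then 1 else 2) :
    ((X : Polynomial ℤ) • A - B.transpose).det = 2 * X ^ n - 1 := by
  set M := (X : Polynomial ℤ) • A - B.transpose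
  have hM : ∀ i j, M i j = X * (if i ≤ j then 2 else 1) - (if j ≤ i then 1 else 2) := by
    simp [M, hA, hB]
  have hupper : (M - ((X : ℤ[X]) - 1) • of fun _ _ => 1).det = X ^ n := by
    refine (det_eq_pow_of_isUpperTriangular (fun i j (hji : j < i) => ?_) fun i => ?_).trans
      (by rw [Fintype.card_fin])
    · simp [hM, not_le.mpr hji, hji.le]
    · simp [hM]
      ring
  have hlower : (M - (2 * ((X : ℤ[X]) - 1)) • of fun _ _ => 1).det = 1 := by
    rw [← det_transpose]
    refine (det_eq_pow_of_isUpperTriangular (fun i j (hji : j < i) => ?_) fun i => ?_).trans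
      (one_pow _)
    · simp [hM, not_le.mpr hji, hji.le]
      ring
    · simp [hM]
      ring
  obtain ⟨c, hc⟩ := exists_det_add_smul_ones_eq_add_mul M
  rw [sub_eq_add_neg, ← neg_smul, hc] at hupper hlower
  linear_combination 2 * hupper - hlower

/-- `det (t·Aₙ − Bₙᵀ) = 2tⁿ − 1` for the Seifert-matrix blocks of `K_{n,m}`. -/
theorem det_tA_sub_Bt (n : ℕ) (hn : 1 ≤ n)
    (A B : Matrix (Fin n) (Fin n) (Polynomial ℤ))
    (hA : ∀ i j, A i j = if i ≤ j then 2 else 1)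
    (hB : ∀ i j, B i j = if i ≤ j then 1 else 2) :
    ((X : Polynomial ℤ) • A - B.transpose).det = 2 * X ^ n - 1 :=
  det_tA_sub_Bt_general n A B hA hB
end

section
/- Let n ≥ 1 and let t denote the variable X of the polynomial ring ℤ[t]. Let A_n and B_n be the n×n matrices over ℤ[t] with entries (A_n)_{ij} = 2 if i ≤ j and 1 if i > j, and (B_n)_{ij} = 1 if i ≤ j and 2 if i > j. Then det(A_n − t·B_nᵀ) = 2 − tⁿ in ℤ[t]. -/
/-!
`A - t • Bᵀ` has a constant `a` above the diagonal, `d` on it and `b` below it. Adding a constant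
`x` to every entry of a square matrix changes its determinant affinely in `x`: after replacing
each row but the first by its difference with the previous one, only the first row depends on `x`.
For `x = -a` and `x = -b` the matrix becomes triangular, with determinants `(d - a)ⁿ` and
`(d - b)ⁿ`; eliminating the unknown slope gives `(b - a) * det = b * (d - a)ⁿ - a * (d - b)ⁿ`.
With `a = 2 - 2t`, `d = 2 - t`, `b = 1 - t` this reads `(t - 1) * det = (t - 1) * (2 - tⁿ)`, and
`t - 1` is a nonzerodivisor in `ℤ[t]`.
-/

open Polynomial

namespace Matrix

variable {R : Type*} [CommRing R]

theorem exists_det_add_const_eq {n : ℕ} (M : Matrix (Fin (n + 1)) (Fin (n + 1)) R) :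
    ∃ c, ∀ x, (M + of fun _ _ => x).det = M.det + x * c := by
  let D : Matrix (Fin (n + 1)) (Fin (n + 1)) R := of (Fin.cons 0 fun i => M i.succ - M i.castSucc)
  have hD : ∀ x, (M + of fun _ _ => x).det = (D.updateRow 0 (M 0 + x • 1)).det := fun x =>
    det_eq_of_forall_row_eq_smul_add_pred (fun _ => 1) (by simp) (by intro i j; simp [D]; ring)
  have h0 := hD 0
  rw [show (of fun _ _ => (0 : R)) = 0 from of_zero, add_zero, zero_smul, add_zero] at h0
  refine ⟨(D.updateRow 0 1).det, fun x => ?_⟩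
  rw [hD, det_updateRow_add, det_updateRow_smul, ← h0]

def upperDiagLower (n : ℕ) (a d b : R) : Matrix (Fin n) (Fin n) R :=
  of fun i j => if i < j then a else if i = j then d else b

theorem upperDiagLower_add_const (n : ℕ) (a d b x : R) :
    upperDiagLower n a d b + of (fun _ _ => x) = upperDiagLower n (a + x) (d + x) (b + x) := by
  ext i j
  simp only [upperDiagLower, add_apply, of_apply]
  split_ifs <;> rfl

theorem det_upperDiagLower_zero_left (n : ℕ) (d b : R) :
    (upperDiagLower n 0 d b).det = d ^ n := by
  rw [det_of_isLowerTriangular _ fun i j (hij : i < j) => by simp [upperDiagLower, hij]]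
  simp [upperDiagLower]

theorem det_upperDiagLower_zero_right (n : ℕ) (a d : R) :
    (upperDiagLower n a d 0).det = d ^ n := by
  rw [det_of_isUpperTriangular fun i j (hij : j < i) =>
    by simp [upperDiagLower, hij.not_gt, hij.ne']]
  simp [upperDiagLower]

theorem sub_mul_det_upperDiagLower (n : ℕ) (a d b : R) :
    (b - a) * (upperDiagLower n a d b).det = b * (d - a) ^ n - a * (d - b) ^ n := by
  rcases n with _ | n
  · simp
  obtain ⟨c, hc⟩ := exists_det_add_const_eq (upperDiagLower (n + 1) a d b)
  have ha := hc (-a)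
  have hb := hc (-b)
  rw [upperDiagLower_add_const, add_neg_cancel, ← sub_eq_add_neg, det_upperDiagLower_zero_left]
    at ha
  rw [upperDiagLower_add_const, add_neg_cancel, ← sub_eq_add_neg, det_upperDiagLower_zero_right]
    at hb
  linear_combination a * hb - b * ha

end Matrix

theorem det_A_sub_tBt_general (n : ℕ)
    (A B : Matrix (Fin n) (Fin n) (Polynomial ℤ))
    (hA : ∀ i j, A i j = if i ≤ j then 2 else 1)
    (hB : ∀ i j, B i j = if i ≤ j then 1 else 2) :
    (A - (X : Polynomial ℤ) • B.transpose).det = 2 - X ^ n := by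
  have hM :
      A - (X : ℤ[X]) • B.transpose = Matrix.upperDiagLower n (2 - 2 * X) (2 - X) (1 - X) := by
    ext i j : 1
    simp only [Matrix.sub_apply, Matrix.smul_apply, Matrix.transpose_apply, hA, hB,
      Matrix.upperDiagLower, Matrix.of_apply, smul_eq_mul]
    rcases lt_trichotomy i j with h | rfl | h
    · rw [if_pos h.le, if_neg (not_le.2 h), if_pos h]; ring
    · simp
    · rw [if_neg (not_le.2 h), if_pos h.le, if_neg (not_lt.2 h.le), if_neg h.ne']; ring
  have key := Matrix.sub_mul_det_upperDiagLower n (2 - 2 * X : ℤ[X]) (2 - X) (1 - X)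
  rw [show (2 - X - (2 - 2 * X) : ℤ[X]) = X by ring, show (2 - X - (1 - X) : ℤ[X]) = 1 by ring,
    one_pow] at key
  rw [hM]
  refine mul_left_cancel₀ (X_sub_C_ne_zero 1) ?_
  rw [map_one]
  linear_combination key

/-- `det (Aₙ − t·Bₙᵀ) = 2 − tⁿ` for the Seifert-matrix blocks of `K_{n,m}`. -/
theorem det_A_sub_tBt (n : ℕ) (hn : 1 ≤ n)
    (A B : Matrix (Fin n) (Fin n) (Polynomial ℤ))
    (hA : ∀ i j, A i j = if i ≤ j then 2 else 1)
    (hB : ∀ i j, B i j = if i ≤ j then 1 else 2) :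
    (A - (X : Polynomial ℤ) • B.transpose).det = 2 - X ^ n :=
  det_A_sub_tBt_general n A B hA hB
end

section
/- Let n ≥ 1 and let t denote the variable X of the polynomial ring ℤ[t]. Let M be the n×n matrix over ℤ[t] whose (i,j) entry equals 2t − 2 if i = 1 or j > i, equals 2t − 1 if i = j with i ≥ 2, and equals t − 1 if j < i with i ≥ 2. Then det M = 2·t^{n−1}·(t − 1). -/
/-!
Take a matrix whose first row is constant `a` and whose other rows are `b`, `d`, `c` below,
on and above the diagonal. Subtracting from every column but the first its left neighbour
turns the first row into `(a, 0, …, 0)` and leaves, below it and to the right of the first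
column, an upper bidiagonal block with diagonal `d - b`; so the determinant is `a * (d - b) ^ (n - 1)`.
For `βₙ` we have `a = 2t - 2` and `d - b = t`.
-/

open Polynomial Matrix

variable {R : Type*} [CommRing R]

def topRowConstToeplitz (a b c d : R) (n : ℕ) : Matrix (Fin n) (Fin n) R :=
  of fun i j => if (i : ℕ) = 0 then a else if i < j then c else if i = j then d else b

/-- `topRowConstToeplitz a b c d (m + 1)` after the column operations `Cⱼ₊₁ ← Cⱼ₊₁ - Cⱼ`. -/
def topRowConstToeplitzColDiff (a b c d : R) (m : ℕ) : Matrix (Fin (m + 1)) (Fin (m + 1)) R :=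
  of fun i j =>
    if i = 0 then (if j = 0 then a else 0)
    else if j = 0 then b
    else if j = i then d - b
    else if (j : ℕ) = i + 1 then c - d
    else 0

theorem det_topRowConstToeplitz_eq_det_colDiff (a b c d : R) (m : ℕ) :
    (topRowConstToeplitz a b c d (m + 1)).det = (topRowConstToeplitzColDiff a b c d m).det := by
  refine det_eq_of_forall_col_eq_smul_add_pred (fun _ => 1) (fun i => ?_) (fun i j => ?_)
  · by_cases hi : i = 0 <;>
      simp [topRowConstToeplitz, topRowConstToeplitzColDiff, hi]
  · simp only [topRowConstToeplitz, topRowConstToeplitzColDiff, of_apply, one_mul,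
      Fin.succ_ne_zero, if_false]
    simp only [Fin.ext_iff, Fin.lt_def, Fin.val_succ, Fin.val_castSucc, Fin.val_zero]
    split_ifs <;> first | ring1 | omega

theorem det_topRowConstToeplitzColDiff (a b c d : R) (m : ℕ) :
    (topRowConstToeplitzColDiff a b c d m).det = a * (d - b) ^ m := by
  set B := topRowConstToeplitzColDiff a b c d m
  have hminor : (B.submatrix Fin.succ Fin.succ).det = (d - b) ^ m := by
    rw [det_of_isUpperTriangular]
    · simp [B, topRowConstToeplitzColDiff]
    · intro i j hji
      have : (j : ℕ) < i := hji
      simp only [B, topRowConstToeplitzColDiff, submatrix_apply, of_apply, Fin.succ_ne_zero,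
        if_false, Fin.succ_inj]
      simp only [Fin.ext_iff, Fin.val_succ]
      split_ifs <;> first | rfl | omega
  rw [det_succ_row_zero, Fin.sum_univ_succ, Fin.succAbove_zero, hminor]
  simp [B, topRowConstToeplitzColDiff]

theorem det_topRowConstToeplitz (a b c d : R) (m : ℕ) :
    (topRowConstToeplitz a b c d (m + 1)).det = a * (d - b) ^ m := by
  rw [det_topRowConstToeplitz_eq_det_colDiff, det_topRowConstToeplitzColDiff]

/-- Rows are indexed by `Fin n`: the paper's first row `i = 1` is `i = 0` here. -/
theorem det_beta (n : ℕ) (hn : 1 ≤ n)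
    (M : Matrix (Fin n) (Fin n) (Polynomial ℤ))
    (hM : ∀ i j, M i j =
      if (i : ℕ) = 0 ∨ i < j then 2 * X - 2
      else if i = j then 2 * X - 1
      else X - 1) :
    M.det = 2 * X ^ (n - 1) * (X - 1) := by
  obtain ⟨m, rfl⟩ := Nat.exists_eq_add_of_le' hn
  have hM' : M = topRowConstToeplitz (2 * X - 2) (X - 1) (2 * X - 2) (2 * X - 1) (m + 1) := by
    ext i j
    rw [hM, topRowConstToeplitz, of_apply]
    by_cases hi : (i : ℕ) = 0 <;> simp [hi]
  rw [hM', det_topRowConstToeplitz, Nat.add_sub_cancel]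
  ring
end

section
/- Let n ≥ 1 and let t denote the variable X of the polynomial ring ℤ[t]. Let A'_n and B'_n be the n×n matrices over ℤ[t] with entries (A'_n)_{ij} = −2 if i ≤ j and −3 if i > j, and (B'_n)_{ij} = −3 if i ≤ j and −2 if i > j. Then det(t·A'_n − B'_nᵀ) = 3 − 2tⁿ in ℤ[t]. -/
/-!
Since `Bᵀ = A - 1`, we have `t • A - Bᵀ = 1 + (t - 1) • A`, and as `A = -2` on and above the
diagonal and `-3` below it, this is `(1 - (t - 1) • L) - 2 (t - 1) • 𝟙𝟙ᵀ` with `L` the strictly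
lower triangular all-ones matrix. The first summand is unitriangular and sends the vector
`(tⁱ)ᵢ` to `𝟙` (a geometric sum), so the matrix determinant lemma gives
`det = 1 - 2 (t - 1) ∑ᵢ tⁱ = 1 - 2 (tⁿ - 1) = 3 - 2 tⁿ`.
-/

open Polynomial Matrix Finset

theorem Fin.sum_Iio_val {M : Type*} [AddCommMonoid M] {n : ℕ} (f : ℕ → M) (i : Fin n) :
    ∑ j ∈ Iio i, f j = ∑ k ∈ range i, f k := by
  rw [← Nat.Iio_eq_range, ← Fin.map_valEmbedding_Iio, sum_map]
  rfl

theorem Matrix.det_add_vecMulVec_mulVec {m R : Type*} [Fintype m] [DecidableEq m] [CommRing R]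
    (M : Matrix m m R) (u v : m → R) :
    (M + vecMulVec (M *ᵥ u) v).det = M.det * (1 + v ⬝ᵥ u) := by
  rw [← mul_vecMulVec, ← det_one_add_replicateCol_mul_replicateRow (ι := Unit), ← vecMulVec_eq,
    ← det_mul, Matrix.mul_add, Matrix.mul_one]

def strictLowerOnes (R : Type*) [Zero R] [One R] (n : ℕ) : Matrix (Fin n) (Fin n) R :=
  of fun i j => if j < i then 1 else 0

section StrictLowerOnes

variable {R : Type*} [CommRing R] {n : ℕ}

theorem strictLowerOnes_mulVec (v : Fin n → R) :
    strictLowerOnes R n *ᵥ v = fun i => ∑ j ∈ Iio i, v j := by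
  ext i
  simp [mulVec, dotProduct, strictLowerOnes, sum_ite, filter_gt_eq_Iio]

theorem det_one_sub_smul_strictLowerOnes (s : R) :
    (1 - s • strictLowerOnes R n : Matrix (Fin n) (Fin n) R).det = 1 := by
  rw [det_of_isLowerTriangular]
  · simp [strictLowerOnes]
  · intro i j (hij : i < j)
    simp [strictLowerOnes, hij.ne, hij.not_gt]

theorem one_sub_smul_strictLowerOnes_mulVec_pow (t : R) :
    (1 - (t - 1) • strictLowerOnes R n : Matrix (Fin n) (Fin n) R) *ᵥ (fun j => t ^ (j : ℕ)) =
      1 := by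
  ext i
  rw [sub_mulVec, smul_mulVec, strictLowerOnes_mulVec, one_mulVec]
  simp only [Pi.sub_apply, Pi.smul_apply, smul_eq_mul, Pi.one_apply,
    Fin.sum_Iio_val (t ^ ·), mul_geom_sum]
  ring

theorem det_one_sub_smul_strictLowerOnes_add_vecMulVec_const (t c : R) :
    (1 - (t - 1) • strictLowerOnes R n + vecMulVec (fun _ => c) 1).det =
      1 + c * ∑ k ∈ range n, t ^ k := by
  have hc : (fun _ => c) = (1 - (t - 1) • strictLowerOnes R n : Matrix (Fin n) (Fin n) R) *ᵥ
      c • fun j : Fin n => t ^ (j : ℕ) := by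
    rw [mulVec_smul, one_sub_smul_strictLowerOnes_mulVec_pow]
    ext; simp
  rw [hc, det_add_vecMulVec_mulVec, det_one_sub_smul_strictLowerOnes, one_dotProduct, one_mul,
    ← Fin.sum_univ_eq_sum_range]
  simp [mul_sum]

end StrictLowerOnes

theorem det_tA'_sub_B't_general (n : ℕ)
    (A B : Matrix (Fin n) (Fin n) (Polynomial ℤ))
    (hA : ∀ i j, A i j = if i ≤ j then -2 else -3)
    (hB : ∀ i j, B i j = if i ≤ j then -3 else -2) :
    ((X : Polynomial ℤ) • A - B.transpose).det = 3 - 2 * X ^ n := by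
  have hdecomp : (X : ℤ[X]) • A - Bᵀ =
      1 - (X - 1 : ℤ[X]) • strictLowerOnes ℤ[X] n + vecMulVec (fun _ => -2 * (X - 1)) 1 := by
    ext i j : 1
    simp only [Matrix.sub_apply, Matrix.add_apply, Matrix.smul_apply, transpose_apply, hA, hB,
      strictLowerOnes, of_apply, one_apply, vecMulVec_apply, Pi.one_apply, smul_eq_mul]
    split_ifs <;> grind
  rw [hdecomp, det_one_sub_smul_strictLowerOnes_add_vecMulVec_const, mul_assoc, mul_geom_sum]
  ring

/-- `det (t·A'ₙ − B'ₙᵀ) = 3 − 2tⁿ` for the Seifert-matrix blocks of `K'_{n,m}`. -/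
theorem det_tA'_sub_B't (n : ℕ) (hn : 1 ≤ n)
    (A B : Matrix (Fin n) (Fin n) (Polynomial ℤ))
    (hA : ∀ i j, A i j = if i ≤ j then -2 else -3)
    (hB : ∀ i j, B i j = if i ≤ j then -3 else -2) :
    ((X : Polynomial ℤ) • A - B.transpose).det = 3 - 2 * X ^ n :=
  det_tA'_sub_B't_general n A B hA hB
end
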